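/- arXiv:1710.10112 — 7 statements merged into one kernel-verified Lean document; each statement's English description precedes it below -/
import Mathlib

section
/- For a finite connected graph G, the hyperopic cop number satisfies c_H(G) = 1 if and only if G is a tree. -/
/-- A single move in (reflexive) Cops and Robbers: stay put or move to an adjacent vertex. -/
def CRStep {V : Type*} (G : SimpleGraph V) (u v : V) : Prop := u = v ∨ G.Adj u v

/-- The list of the robber's first `n` positions. -/
def robberHist {V : Type*} (r : ℕ → V) (n : ℕ) : List V := (List.range n).map r

/-- `k` cops have a winning strategy in (perfect-information) Cops and Robbers on `G`.
A cop strategy `F` assigns to every history of robber positions the positions of the `k` cops;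
`F []` is the initial placement of the cops, chosen before the robber picks a start vertex,
and consecutive cop positions must be legal moves.  Given a robber trajectory `r`
(every consecutive pair a legal move), the positions of the cops after their `n`-th move are
`F (robberHist r n)`.  The cops win if at some moment (after a cop move or after a robber
move) some cop occupies the robber's current vertex. -/
def CopsWin {V : Type*} (G : SimpleGraph V) (k : ℕ) : Prop :=
  ∃ F : List V → Fin k → V,
    (∀ l x i, CRStep G (F l i) (F (l ++ [x]) i)) ∧
    ∀ r : ℕ → V, (∀ n, CRStep G (r n) (r (n + 1))) →
      ∃ n, ∃ i, F (robberHist r n) i = r n ∨ F (robberHist r (n + 1)) i = r n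

/-- The cop number of `G`: the least number of cops having a winning strategy. -/
noncomputable def copNumber {V : Type*} (G : SimpleGraph V) : ℕ := sInf {k | CopsWin G k}

open Classical in
/-- The first `n` observations made by hyperopic cops using strategy `F` against the robber
trajectory `r`: after the robber's `n`-th move, the cops (positioned at `F` applied to the
previous observations) see the robber (observation `some (r n)`) unless the robber is
adjacent to every cop (observation `none`). -/
noncomputable def hObsList {V : Type*} (G : SimpleGraph V) {k : ℕ}
    (F : List (Option V) → Fin k → V) (r : ℕ → V) : ℕ → List (Option V)
  | 0 => []
  | n + 1 =>
      hObsList G F r n ++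
        [if ∀ i, G.Adj (F (hObsList G F r n) i) (r n) then none else some (r n)]

/-- `k` cops have a winning strategy in Hyperopic Cops and Robbers on `G`: a strategy
`F`, depending only on the history of observations (the robber being invisible exactly
when adjacent to every cop), which guarantees capture against every robber trajectory. -/
def HCopsWin {V : Type*} (G : SimpleGraph V) (k : ℕ) : Prop :=
  ∃ F : List (Option V) → Fin k → V,
    (∀ l o i, CRStep G (F l i) (F (l ++ [o]) i)) ∧
    ∀ r : ℕ → V, (∀ n, CRStep G (r n) (r (n + 1))) →
      ∃ n, ∃ i, F (hObsList G F r n) i = r n ∨ F (hObsList G F r (n + 1)) i = r n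

/-- The hyperopic cop number of `G`: the least number of cops having a winning strategy
in Hyperopic Cops and Robbers. -/
noncomputable def hyperopicCopNumber {V : Type*} (G : SimpleGraph V) : ℕ :=
  sInf {k | HCopsWin G k}


/-!
On a tree the cop remembers the robber's last seen position `t` and always steps towards it,
starting on a leaf with `t` its neighbour. The robber then stays in the branch at the cop
containing `t`. An invisible robber is adjacent to the cop, hence is the cop's next step and is
caught; a visible one is chased and its branch strictly shrinks, which cannot go on forever.

Conversely, on a cycle the robber evades a single cop: among its vertex and its two neighbours on
the cycle it moves to one that is neither the cop's vertex nor where the cop goes on seeing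
nothing. There the robber is either invisible, or not adjacent to the cop and out of its reach.
-/

open Classical in
noncomputable def hObs {V : Type*} (G : SimpleGraph V) {k : ℕ}
    (F : List (Option V) → Fin k → V) (L : List (Option V)) (y : V) : Option V :=
  if ∀ i, G.Adj (F L i) y then none else some y

section Observation

variable {V : Type*} {G : SimpleGraph V} {k : ℕ} {F : List (Option V) → Fin k → V}

theorem hObsList_succ (r : ℕ → V) (n : ℕ) :
    hObsList G F r (n + 1) = hObsList G F r n ++ [hObs G F (hObsList G F r n) (r n)] :=
  rfl

theorem hObs_of_forall_adj {L : List (Option V)} {y : V} (h : ∀ i, G.Adj (F L i) y) :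
    hObs G F L y = none :=
  if_pos h

theorem hObs_of_not_forall_adj {L : List (Option V)} {y : V} (h : ¬∀ i, G.Adj (F L i) y) :
    hObs G F L y = some y :=
  if_neg h

end Observation

theorem hyperopicCopNumber_eq_one_iff {V : Type*} [Nonempty V] (G : SimpleGraph V) :
    hyperopicCopNumber G = 1 ↔ HCopsWin G 1 := by
  have not_zero : ¬HCopsWin G 0 := fun ⟨_, _, hwin⟩ ↦
    let v : V := Classical.arbitrary V
    (hwin (fun _ ↦ v) fun _ ↦ Or.inl rfl).elim fun _ ⟨i, _⟩ ↦ i.elim0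
  constructor
  · intro h
    have hne : {k | HCopsWin G k}.Nonempty :=
      Set.nonempty_iff_ne_empty.2 fun hempty ↦ by simp [hyperopicCopNumber, hempty] at h
    exact h ▸ Nat.sInf_mem hne
  · intro h
    refine le_antisymm (Nat.sInf_le h) (Nat.one_le_iff_ne_zero.2 fun h0 ↦ ?_)
    rcases Nat.sInf_eq_zero.1 h0 with h0 | h0
    · exact not_zero h0
    · exact (Set.eq_empty_iff_forall_notMem.1 h0) 1 h

namespace SimpleGraph

variable {V : Type*} {G : SimpleGraph V}

theorem exists_evading_robber {k : ℕ} (F : List (Option V) → Fin k → V) {S : Set V} {v₀ : V}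
    (hv₀ : v₀ ∈ S)
    (hS : ∀ L, ∀ v ∈ S, ∃ y ∈ S, CRStep G v y ∧
      ∀ i, F L i ≠ y ∧ F (L ++ [hObs G F L y]) i ≠ y) :
    ∃ r : ℕ → V, (∀ n, CRStep G (r n) (r (n + 1))) ∧
      ∀ n i, F (hObsList G F r n) i ≠ r n ∧ F (hObsList G F r (n + 1)) i ≠ r n := by
  choose! next hnextS hnextStep hnextSafe using hS
  -- `play n`: the robber's vertex before its `n`-th move (`v₀` for `n = 0`) and the
  -- cops' observations so far
  let play : ℕ → V × List (Option V) := fun n ↦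
    Nat.rec (v₀, []) (fun _ p ↦ (next p.2 p.1, p.2 ++ [hObs G F p.2 (next p.2 p.1)])) n
  let r : ℕ → V := fun n ↦ next (play n).2 (play n).1
  have hplayS : ∀ n, (play n).1 ∈ S := fun n ↦ by
    induction n with
    | zero => exact hv₀
    | succ n ih => exact hnextS _ _ ih
  have hobs : ∀ n, hObsList G F r n = (play n).2 := fun n ↦ by
    induction n with
    | zero => rfl
    | succ n ih => rw [hObsList_succ, ih]
  refine ⟨r, fun n ↦ hnextStep _ _ (hplayS (n + 1)), fun n i ↦ ?_⟩
  rw [hObsList_succ, hobs]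
  exact hnextSafe _ _ (hplayS n) i

theorem not_hCopsWin_one_of_two_adj {S : Set V} (hS : S.Nonempty)
    (h2 : ∀ v ∈ S, ∃ a ∈ S, ∃ b ∈ S, a ≠ b ∧ G.Adj v a ∧ G.Adj v b) :
    ¬HCopsWin G 1 := by
  rintro ⟨F, hF, hwin⟩
  obtain ⟨r, hr, hsafe⟩ := exists_evading_robber F hS.some_mem fun L v hv ↦ by
    obtain ⟨a, ha, b, hb, hab, hva, hvb⟩ := h2 v hv
    obtain ⟨y, hyS, hvy, hyc, hyn⟩ :
        ∃ y ∈ S, CRStep G v y ∧ F L 0 ≠ y ∧ F (L ++ [none]) 0 ≠ y := by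
      have pigeonhole : ∀ c w : V, ∃ y, (y = v ∨ y = a ∨ y = b) ∧ c ≠ y ∧ w ≠ y := by
        have := G.ne_of_adj hva
        have := G.ne_of_adj hvb
        intro c w
        by_contra! h
        have := h v; have := h a; have := h b
        by_cases c = v <;> by_cases c = a <;> simp_all
      obtain ⟨y, hy, hyc, hyn⟩ := pigeonhole (F L 0) (F (L ++ [none]) 0)
      rcases hy with rfl | rfl | rfl
      exacts [⟨_, hv, Or.inl rfl, hyc, hyn⟩, ⟨_, ha, Or.inr hva, hyc, hyn⟩,
        ⟨_, hb, Or.inr hvb, hyc, hyn⟩]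
    refine ⟨y, hyS, hvy, fun i ↦ ?_⟩
    obtain rfl := Subsingleton.elim i 0
    refine ⟨hyc, ?_⟩
    by_cases hadj : G.Adj (F L 0) y
    · rwa [hObs_of_forall_adj (Fin.forall_fin_one.2 hadj)]
    · rcases hF L (hObs G F L y) 0 with hstay | hmove
      · exact hstay ▸ hyc
      · exact fun hy ↦ hadj (hy ▸ hmove)
  obtain ⟨n, i, hcaught⟩ := hwin r hr
  exact hcaught.elim (hsafe n i).1 (hsafe n i).2

theorem Walk.IsCycle.exists_two_adj {u v : V} {c : G.Walk u u} (hc : c.IsCycle)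
    (hv : v ∈ c.support) :
    ∃ a ∈ c.support, ∃ b ∈ c.support, a ≠ b ∧ G.Adj v a ∧ G.Adj v b := by
  classical
  have hc' := hc.rotate hv
  refine ⟨_, (c.mem_support_rotate_iff v hv).1 ((c.rotate v hv).getVert_mem_support 1),
    _, (c.mem_support_rotate_iff v hv).1 ((c.rotate v hv).getVert_mem_support _),
    hc'.snd_ne_penultimate, Walk.adj_snd hc'.not_nil, (Walk.adj_penultimate hc'.not_nil).symm⟩

theorem not_hCopsWin_one_of_not_isAcyclic (h : ¬G.IsAcyclic) : ¬HCopsWin G 1 := by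
  obtain ⟨u, c, hc⟩ : ∃ u, ∃ c : G.Walk u u, c.IsCycle := by
    simpa [IsAcyclic] using h
  exact not_hCopsWin_one_of_two_adj (S := {v | v ∈ c.support}) ⟨u, c.start_mem_support⟩
    fun v hv ↦ hc.exists_two_adj hv

/-- For `t ≠ c`, the component of `G - c` containing `t`. -/
def branch (G : SimpleGraph V) (c t : V) : Set V := {y | ∃ p : G.Walk t y, c ∉ p.support}

section Branch

variable {c t x y z : V}

theorem notMem_branch_left : c ∉ G.branch c t :=
  fun ⟨p, hp⟩ ↦ hp p.end_mem_support

theorem mem_branch_self (h : t ≠ c) : t ∈ G.branch c t :=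
  ⟨Walk.nil, by simpa using h.symm⟩

theorem mem_branch_comm : y ∈ G.branch c t ↔ t ∈ G.branch c y :=
  ⟨fun ⟨p, hp⟩ ↦ ⟨p.reverse, by simpa using hp⟩, fun ⟨p, hp⟩ ↦ ⟨p.reverse, by simpa using hp⟩⟩

theorem branch_subset_of_mem (h : y ∈ G.branch c t) : G.branch c y ⊆ G.branch c t :=
  fun _ ⟨q, hq⟩ ↦ h.elim fun p hp ↦ ⟨p.append q, by simp [Walk.mem_support_append_iff, hp, hq]⟩

theorem mem_branch_of_crStep (hy : y ∈ G.branch c t) (hyz : CRStep G y z) (hz : z ≠ c) :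
    z ∈ G.branch c t := by
  rcases hyz with rfl | hadj
  · exact hy
  · refine branch_subset_of_mem hy ⟨Walk.cons hadj Walk.nil, ?_⟩
    have hyc : y ≠ c := fun h ↦ notMem_branch_left (h ▸ hy)
    simp [hyc.symm, hz.symm]

end Branch

namespace IsTree

section Paths

variable (hT : G.IsTree)

noncomputable def path (x y : V) : G.Walk x y :=
  (hT.existsUnique_path x y).exists.choose

theorem isPath_path (x y : V) : (hT.path x y).IsPath :=
  (hT.existsUnique_path x y).exists.choose_spec

theorem eq_path {x y : V} {p : G.Walk x y} (hp : p.IsPath) : p = hT.path x y :=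
  (hT.existsUnique_path x y).unique hp (hT.isPath_path x y)

noncomputable def nextToward (x y : V) : V := (hT.path x y).snd

variable {c t x y : V}

theorem nextToward_self (x : V) : hT.nextToward x x = x := by
  rw [nextToward, Walk.eq_nil_iff_nil.2 (Walk.isPath_iff_nil.1 (hT.isPath_path x x))]
  rfl

theorem adj_nextToward (h : x ≠ y) : G.Adj x (hT.nextToward x y) :=
  Walk.adj_snd (Walk.not_nil_of_ne h)

theorem crStep_nextToward (x y : V) : CRStep G x (hT.nextToward x y) := by
  by_cases h : x = y
  · subst h
    exact Or.inl (hT.nextToward_self x).symm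
  · exact Or.inr (hT.adj_nextToward h)

theorem mem_branch_iff : y ∈ G.branch c t ↔ c ∉ (hT.path t y).support := by
  classical
  refine ⟨fun ⟨p, hp⟩ hc ↦ hp ?_, fun h ↦ ⟨_, h⟩⟩
  rw [← hT.eq_path p.toPath.prop] at hc
  exact p.support_toPath_subset_support hc

theorem eq_nextToward_of_mem_branch (hy : y ∈ G.branch c t) (hadj : G.Adj c y) :
    y = hT.nextToward c t := by
  have hc : c ∉ (hT.path y t).support := hT.mem_branch_iff.1 (mem_branch_comm.1 hy)
  rw [nextToward, ← hT.eq_path ((Walk.cons_isPath_iff hadj _).2 ⟨hT.isPath_path y t, hc⟩),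
    Walk.snd_cons]

theorem nextToward_mem_branch (hx : x ≠ c) : hT.nextToward c x ∈ G.branch c x := by
  have hnil := Walk.not_nil_of_ne hx.symm (p := hT.path c x)
  have hpath := (hT.path c x).cons_tail_eq hnil ▸ hT.isPath_path c x
  exact mem_branch_comm.1 ⟨_, ((Walk.cons_isPath_iff _ _).1 hpath).2⟩

theorem branch_nextToward_subset : G.branch (hT.nextToward c x) x ⊆ G.branch c x := by
  classical
  intro y hy
  rw [mem_branch_comm, hT.mem_branch_iff] at hy ⊢
  intro hc
  have hdrop : (hT.path y x).dropUntil c hc = hT.path c x :=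
    hT.eq_path ((hT.isPath_path y x).dropUntil hc)
  exact hy ((hT.path y x).support_dropUntil_subset_support hc
    (hdrop ▸ Walk.getVert_mem_support _ 1))

theorem branch_nextToward_ssubset (hy : y ∈ G.branch c t) :
    G.branch (hT.nextToward c y) y ⊂ G.branch c t := by
  have hyc : y ≠ c := fun h ↦ notMem_branch_left (h ▸ hy)
  rw [Set.ssubset_iff_of_subset (hT.branch_nextToward_subset.trans (branch_subset_of_mem hy))]
  exact ⟨_, branch_subset_of_mem hy (hT.nextToward_mem_branch hyc), notMem_branch_left⟩

/-- The state is the cop's position and the robber's last seen position. -/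
noncomputable def chase (s : V × V) (o : Option V) : V × V :=
  (hT.nextToward s.1 (o.getD s.2), o.getD s.2)

end Paths

theorem mem_branch_of_leaf (hT : G.IsTree) {ℓ u y : V} (hℓ : ∀ w, G.Adj ℓ w → w = u)
    (hy : y ≠ ℓ) : y ∈ G.branch ℓ u := by
  have h := hT.nextToward_mem_branch hy
  rwa [hℓ _ (hT.adj_nextToward hy.symm), ← mem_branch_comm] at h

theorem hCopsWin_one [Finite V] (hT : G.IsTree) : HCopsWin G 1 := by
  classical
  cases nonempty_fintype V
  rcases subsingleton_or_nontrivial V with _ | _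
  · obtain ⟨v⟩ := hT.connected.nonempty
    exact ⟨fun _ _ ↦ v, fun _ _ _ ↦ Or.inl rfl, fun r _ ↦ ⟨0, 0, Or.inl (Subsingleton.elim _ _)⟩⟩
  obtain ⟨ℓ, hℓ⟩ := hT.exists_vert_degree_one_of_nontrivial
  obtain ⟨u, -, hu⟩ := degree_eq_one_iff_existsUnique_adj.1 hℓ
  let state : List (Option V) → V × V := fun L ↦ L.foldl hT.chase (ℓ, u)
  let F : List (Option V) → Fin 1 → V := fun L _ ↦ (state L).1
  refine ⟨F, fun L o _ ↦ ?_, fun r hr ↦ ?_⟩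
  · simp only [F, state, List.foldl_append, List.foldl_cons, List.foldl_nil]
    exact hT.crStep_nextToward _ _
  by_contra! hfree
  let s : ℕ → V × V := fun n ↦ state (hObsList G F r n)
  have hcop : ∀ n, (s n).1 ≠ r n ∧ (s (n + 1)).1 ≠ r n := fun n ↦ hfree n 0
  have hs : ∀ n, s (n + 1) = hT.chase (s n) (hObs G F (hObsList G F r n) (r n)) := fun n ↦ by
    simp [s, state, hObsList_succ]
  have round : ∀ n, r n ∈ G.branch (s n).1 (s n).2 →
      s (n + 1) = (hT.nextToward (s n).1 (r n), r n) := fun n hn ↦ by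
    by_cases hadj : G.Adj (s n).1 (r n)
    · refine absurd ?_ (hcop n).2
      rw [hs, hObs_of_forall_adj (F := F) (Fin.forall_fin_one.2 hadj)]
      exact (hT.eq_nextToward_of_mem_branch hn hadj).symm
    · rw [hs, hObs_of_not_forall_adj (F := F) (by simpa [Fin.forall_fin_one] using hadj)]
      rfl
  have hinv : ∀ n, r n ∈ G.branch (s n).1 (s n).2 := fun n ↦ by
    induction n with
    | zero => exact hT.mem_branch_of_leaf hu (hcop 0).1.symm
    | succ n ih =>
      have hstep := hcop n
      have hnext := hcop (n + 1)
      rw [round n ih] at hstep hnext ⊢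
      exact mem_branch_of_crStep (mem_branch_self hstep.2.symm) (hr n) hnext.1.symm
  have hshrink : ∀ n, G.branch (s (n + 1)).1 (s (n + 1)).2 < G.branch (s n).1 (s n).2 :=
    fun n ↦ by
      rw [round n (hinv n)]
      exact hT.branch_nextToward_ssubset (hinv n)
  exact not_strictAnti_of_wellFoundedLT _
    (strictAnti_nat_of_succ_lt (f := fun n ↦ G.branch (s n).1 (s n).2) hshrink)

end IsTree

end SimpleGraph

/-- For a finite connected graph `G`, the hyperopic cop number satisfies
`c_H(G) = 1` if and only if `G` is a tree. -/
theorem hyperopicCopNumber_eq_one_iff_isTree {V : Type*} [Fintype V]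
    (G : SimpleGraph V) (hG : G.Connected) :
    hyperopicCopNumber G = 1 ↔ G.IsTree := by
  have := hG.nonempty
  rw [hyperopicCopNumber_eq_one_iff]
  exact ⟨fun h ↦ ⟨hG, by_contra fun hcyc ↦ SimpleGraph.not_hCopsWin_one_of_not_isAcyclic hcyc h⟩,
    fun hT ↦ hT.hCopsWin_one⟩
end

section
/- If a finite connected graph G is triangle-free, then c_H(G) ≤ c(G) + 1. -/
/-!
Take a winning strategy of `k ≥ 1` cops in the ordinary game and add one extra cop, the shadow
of cop `0`: whenever cop `0` moves, the shadow steps onto the vertex cop `0` has just left, so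
the two remain adjacent forever (if cop `0` starts on an isolated vertex, it never moves and the
robber is never adjacent to it). In a triangle-free graph no vertex is adjacent to two adjacent
vertices, so the robber can never be adjacent to every cop and is therefore always visible.
The `k` original cops then see the full robber history and win as in the ordinary game.
-/

section CopsAndRobbers

variable {V : Type*} {G : SimpleGraph V}

lemma CRStep.refl (u : V) : CRStep G u u := Or.inl rfl

def IsLegalStrategy {α : Type*} (G : SimpleGraph V) (f : List α → V) : Prop :=
  ∀ l x, CRStep G (f l) (f (l ++ [x]))

lemma IsLegalStrategy.comp_reduceOption {f : List V → V} (hf : IsLegalStrategy G f) :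
    IsLegalStrategy G (fun l : List (Option V) => f l.reduceOption) := fun l o => by
  cases o with
  | none => simpa [List.reduceOption_append] using CRStep.refl _
  | some x => simpa [List.reduceOption_append] using hf _ x

lemma robberHist_succ (r : ℕ → V) (n : ℕ) :
    robberHist r (n + 1) = robberHist r n ++ [r n] := by
  simp [robberHist, List.range_succ]

lemma SimpleGraph.CliqueFree.not_adj_of_adj (htf : G.CliqueFree 3) {u w v : V} (huw : G.Adj u w)
    (hu : G.Adj u v) : ¬ G.Adj w v := fun hw => by
  classical exact htf {u, w, v} (SimpleGraph.is3Clique_triple_iff.mpr ⟨huw, hu, hw⟩)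

lemma isEmpty_of_copsWin_zero (h : CopsWin G 0) : IsEmpty V := by
  refine ⟨fun v => ?_⟩
  obtain ⟨F, -, hwin⟩ := h
  obtain ⟨-, i, -⟩ := hwin (fun _ => v) (fun _ => CRStep.refl v)
  exact i.elim0

lemma hCopsWin_zero_of_isEmpty [IsEmpty V] : HCopsWin G 0 :=
  ⟨fun _ => Fin.elim0, fun _ _ i => i.elim0, fun r _ => isEmptyElim (r 0)⟩

lemma copsWin_card [Fintype V] : CopsWin G (Fintype.card V) :=
  ⟨fun _ i => (Fintype.equivFin V).symm i, fun _ _ _ => CRStep.refl _,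
    fun r _ => ⟨0, Fintype.equivFin V (r 0),
      Or.inl ((Fintype.equivFin V).symm_apply_apply _)⟩⟩

section Shadow

variable {α : Type*} (f : List α → V) (w₀ : V)

open Classical in
noncomputable def shadow (l : List α) : V :=
  l.reverseRecOn w₀ fun l x s => if f (l ++ [x]) = f l then s else f l

@[simp]
lemma shadow_nil : shadow f w₀ [] = w₀ := by simp [shadow]

lemma shadow_concat (l : List α) (x : α) [Decidable (f (l ++ [x]) = f l)] :
    shadow f w₀ (l ++ [x]) = if f (l ++ [x]) = f l then shadow f w₀ l else f l := by
  simp only [shadow, List.reverseRecOn_concat]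
  congr

variable {f w₀}

lemma adj_shadow (hf : IsLegalStrategy G f) (hw₀ : G.Adj (f []) w₀) (l : List α) :
    G.Adj (f l) (shadow f w₀ l) := by
  induction l using List.reverseRecOn with
  | nil => rwa [shadow_nil]
  | append_singleton l x ih =>
    classical
    rw [shadow_concat]
    split_ifs with hstay
    · rwa [hstay]
    · exact (hf l x).resolve_left (Ne.symm hstay) |>.symm

lemma isLegalStrategy_shadow (hf : IsLegalStrategy G f) (hw₀ : G.Adj (f []) w₀) :
    IsLegalStrategy G (shadow f w₀) := fun l x => by
  classical
  rw [shadow_concat]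
  split_ifs
  · exact CRStep.refl _
  · exact Or.inr (adj_shadow hf hw₀ l).symm

lemma apply_eq_apply_nil_of_forall_not_adj (hf : IsLegalStrategy G f)
    (hiso : ∀ w, ¬ G.Adj (f []) w) (l : List α) : f l = f [] := by
  induction l using List.reverseRecOn with
  | nil => rfl
  | append_singleton l x ih =>
    rcases hf l x with hstay | hmove
    · rw [← hstay, ih]
    · exact absurd (ih ▸ hmove) (hiso _)

end Shadow

lemma hObsList_eq_map_some {k : ℕ} {F : List (Option V) → Fin k → V}
    (hvis : ∀ l v, ¬ ∀ i, G.Adj (F l i) v) (r : ℕ → V) (n : ℕ) :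
    hObsList G F r n = (robberHist r n).map some := by
  induction n with
  | zero => rfl
  | succ n ih => rw [hObsList, if_neg (hvis _ _), ih, robberHist_succ, List.map_append]; rfl

lemma hCopsWin_succ_of_visible {k : ℕ} {F : List V → Fin k → V} {g : List V → V}
    (hF : ∀ i, IsLegalStrategy G (F · i)) (hg : IsLegalStrategy G g)
    (hwin : ∀ r : ℕ → V, (∀ n, CRStep G (r n) (r (n + 1))) →
      ∃ n, ∃ i, F (robberHist r n) i = r n ∨ F (robberHist r (n + 1)) i = r n)
    (hvis : ∀ l v, (∀ i, G.Adj (F l i) v) → ¬ G.Adj (g l) v) : HCopsWin G (k + 1) := by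
  -- The extra cop is `Fin.last k`; the history is decoded by discarding the `none` observations.
  set F' : List (Option V) → Fin (k + 1) → V :=
    fun l => Fin.snoc (α := fun _ => V) (F l.reduceOption) (g l.reduceOption)
  refine ⟨F', fun l o i => ?_, fun r hr => ?_⟩
  · induction i using Fin.lastCases with
    | last => simpa [F'] using hg.comp_reduceOption l o
    | cast i => simpa [F'] using (hF i).comp_reduceOption l o
  · have hobs := hObsList_eq_map_some (F := F') (G := G) (fun l v hall => hvis _ v
      (fun i => by simpa [F'] using hall i.castSucc) (by simpa [F'] using hall (Fin.last k))) r
    have hF' : ∀ n i, F' (hObsList G F' r n) i.castSucc = F (robberHist r n) i := fun n i => by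
      rw [hobs]
      simp [F', List.reduceOption]
    obtain ⟨n, i, hcap⟩ := hwin r hr
    exact ⟨n, i.castSucc, by rwa [hF', hF']⟩

lemma CopsWin.hCopsWin_succ (htf : G.CliqueFree 3) {k : ℕ} (h : CopsWin G (k + 1)) :
    HCopsWin G (k + 2) := by
  obtain ⟨F, hmove, hwin⟩ := h
  have hF : ∀ i, IsLegalStrategy G (F · i) := fun i l x => hmove l x i
  by_cases hnbr : ∃ w₀, G.Adj (F [] 0) w₀
  · obtain ⟨w₀, hw₀⟩ := hnbr
    exact hCopsWin_succ_of_visible hF (isLegalStrategy_shadow (hF 0) hw₀) hwin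
      fun l v hall => htf.not_adj_of_adj (adj_shadow (hF 0) hw₀ l) (hall 0)
  · push Not at hnbr
    exact hCopsWin_succ_of_visible hF (fun _ _ => CRStep.refl (F [] 0)) hwin
      fun l v hall _ => hnbr v (apply_eq_apply_nil_of_forall_not_adj (hF 0) hnbr l ▸ hall 0)

end CopsAndRobbers

theorem hyperopicCopNumber_le_of_triangleFree_general {V : Type*} [Fintype V]
    (G : SimpleGraph V) (htf : G.CliqueFree 3) :
    hyperopicCopNumber G ≤ copNumber G + 1 := by
  have hwin : CopsWin G (copNumber G) :=
    Nat.sInf_mem (s := {k | CopsWin G k}) ⟨_, copsWin_card⟩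
  cases hc : copNumber G with
  | zero =>
    have := isEmpty_of_copsWin_zero (hc ▸ hwin)
    exact (Nat.sInf_le hCopsWin_zero_of_isEmpty).trans (Nat.zero_le _)
  | succ k => exact Nat.sInf_le ((hc ▸ hwin).hCopsWin_succ htf)

/-- If a finite connected graph `G` is triangle-free, then
`c_H(G) ≤ c(G) + 1`. -/
theorem hyperopicCopNumber_le_of_triangleFree {V : Type*} [Fintype V]
    (G : SimpleGraph V) (hG : G.Connected) (htf : G.CliqueFree 3) :
    hyperopicCopNumber G ≤ copNumber G + 1 :=
  hyperopicCopNumber_le_of_triangleFree_general G htf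
end

section
/- For every n ≥ 1, the complete graph K_n satisfies c_H(K_n) = ⌈n/2⌉; in particular, the bound c_H(G) ≤ ⌈n/2⌉ for connected graphs on n vertices is tight. -/
/-!
With `k` cops on `K_n` and `n ≤ 2k`, the cops occupy `k` vertices, and in their first move jump
to the remaining ones (every move is legal in `K_n`); the robber is caught on its starting vertex.
If `2k < n`, then at every moment the robber can choose a vertex occupied neither by a cop now nor
after the cops' next move. Such a robber is adjacent to every cop and hence never seen, so the
cops, always observing `none`, follow one fixed sequence of positions, which the robber avoids.
-/

theorem hCopsWin_of_cover {V : Type*} {G : SimpleGraph V} {k : ℕ} (a b : Fin k → V)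
    (hab : ∀ i, CRStep G (a i) (b i))
    (hcover : ∀ v, v ∈ Set.range a ∨ v ∈ Set.range b) : HCopsWin G k := by
  classical
  refine ⟨fun l => if l = [] then a else b, fun l o i => ?_, fun r _ => ?_⟩
  · by_cases hl : l = []
    · simpa [hl] using hab i
    · simp only [hl, if_false, List.append_eq_nil_iff, List.cons_ne_nil, and_false]
      exact Or.inl rfl
  · rcases hcover (r 0) with ⟨i, hi⟩ | ⟨i, hi⟩
    · exact ⟨0, i, Or.inl (by simpa [hObsList] using hi)⟩
    · exact ⟨0, i, Or.inr (by simpa [hObsList] using hi)⟩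

theorem crStep_top {V : Type*} (u v : V) : CRStep (⊤ : SimpleGraph V) u v :=
  (eq_or_ne u v).imp_right id

theorem hCopsWin_top_fin {n k : ℕ} (hkn : k ≤ n) (hnk : n ≤ 2 * k) :
    HCopsWin (⊤ : SimpleGraph (Fin n)) k := by
  refine hCopsWin_of_cover (Fin.castLE hkn) (fun i => ⟨n - k + i, by omega⟩)
    (fun _ => crStep_top _ _) fun v => ?_
  by_cases hv : v.1 < k
  · exact Or.inl ⟨⟨v, hv⟩, rfl⟩
  · exact Or.inr ⟨⟨v - (n - k), by omega⟩, Fin.ext (by dsimp only; omega)⟩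

theorem hObsList_eq_replicate_none {V : Type*} {G : SimpleGraph V} {k : ℕ}
    (F : List (Option V) → Fin k → V) (r : ℕ → V)
    (hr : ∀ m i, G.Adj (F (List.replicate m none) i) (r m)) (m : ℕ) :
    hObsList G F r m = List.replicate m none := by
  induction m with
  | zero => rfl
  | succ m ih => rw [hObsList, ih, if_pos (hr m), List.replicate_succ']

theorem exists_forall_ne_ne {V : Type*} [Fintype V] {k : ℕ} (hk : 2 * k < Fintype.card V)
    (a b : Fin k → V) : ∃ v, ∀ i, a i ≠ v ∧ b i ≠ v := by
  classical
  have hcard : (Finset.univ.image a ∪ Finset.univ.image b).card < Fintype.card V :=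
    calc _ ≤ (Finset.univ.image a).card + (Finset.univ.image b).card := Finset.card_union_le _ _
      _ ≤ k + k := by gcongr <;> exact Finset.card_image_le.trans_eq (Finset.card_fin k)
      _ < Fintype.card V := by omega
  obtain ⟨v, hv⟩ := Finset.exists_mem_notMem_of_card_lt_card hcard
  simp only [Finset.mem_union, Finset.mem_image, Finset.mem_univ, true_and, not_or,
    not_exists] at hv
  exact ⟨v, fun i => ⟨hv.1 i, hv.2 i⟩⟩

theorem not_hCopsWin_top {V : Type*} [Fintype V] {k : ℕ} (hk : 2 * k < Fintype.card V) :
    ¬ HCopsWin (⊤ : SimpleGraph V) k := by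
  rintro ⟨F, -, hwin⟩
  choose r hr using fun m =>
    exists_forall_ne_ne hk (F (List.replicate m none)) (F (List.replicate (m + 1) none))
  have hobs := hObsList_eq_replicate_none (G := ⊤) F r fun m i => (hr m i).1
  obtain ⟨m, i, hcap⟩ := hwin r fun _ => crStep_top _ _
  rw [hobs, hobs] at hcap
  exact hcap.elim (hr m i).1 (hr m i).2

theorem hyperopicCopNumber_completeGraph_general (n : ℕ) :
    hyperopicCopNumber (⊤ : SimpleGraph (Fin n)) = (n + 1) / 2 := by
  have hwin : HCopsWin (⊤ : SimpleGraph (Fin n)) ((n + 1) / 2) :=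
    hCopsWin_top_fin (by omega) (by omega)
  refine le_antisymm (Nat.sInf_le hwin) (le_csInf ⟨_, hwin⟩ fun k hk => ?_)
  by_contra! hlt
  exact not_hCopsWin_top (by rw [Fintype.card_fin]; omega) hk

/-- For every `n ≥ 1`, the complete graph `K_n` satisfies
`c_H(K_n) = ⌈n/2⌉`; in particular the bound `c_H(G) ≤ ⌈n/2⌉` for connected graphs
on `n` vertices is tight. -/
theorem hyperopicCopNumber_completeGraph (n : ℕ) (hn : 1 ≤ n) :
    hyperopicCopNumber (⊤ : SimpleGraph (Fin n)) = (n + 1) / 2 :=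
  hyperopicCopNumber_completeGraph_general n
end

section
/- For all n ≥ 3, c_H(K_n − e) = ⌊n/2⌋, where K_n − e denotes the complete graph on n vertices with one edge removed. -/
/-! Upper bound: with `k = ⌊n/2⌋` cops, start on `u` and `k - 1` further vertices, avoiding `v`.
A robber adjacent to every cop avoids `v` (the non-neighbour of `u`) and the cops, so it is on one
of the at most `k` remaining vertices, which the cops occupy next. A visible robber that is not
caught is on `v`; the cops move to `k` vertices off `{u, v}`, the robber cannot step to `u`, and
the cops cover the at most `k` vertices left over in the following move.

Lower bound: if `2j + 2 ≤ n`, the robber stays invisible forever, so the moves of `j` cops are fixed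
in advance. In each round at least two vertices are free of the cops' current and next positions,
and the missing edge `uv` can rule out at most one of them as the robber's next position. -/

open Finset

section Strategies

variable {V : Type*} {k : ℕ}

-- Observation lists are chronological: the head is the observation after the robber's first move.
def twoRoundStrategy {α β : Type*} (p₀ p₁ q₁ q₂ : β) : List (Option α) → β
  | [] => p₀
  | none :: _ => p₁
  | [some _] => q₁
  | some _ :: _ :: _ => q₂

theorem hCopsWin_of_twoRounds (G : SimpleGraph V) (p₀ p₁ q₁ q₂ : Fin k → V)
    (hp₁ : ∀ i, CRStep G (p₀ i) (p₁ i)) (hq₁ : ∀ i, CRStep G (p₀ i) (q₁ i))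
    (hq₂ : ∀ i, CRStep G (q₁ i) (q₂ i))
    (hinvisible : ∀ x, (∀ i, G.Adj (p₀ i) x) → x ∈ Set.range p₁)
    (hvisible : ∀ x y, x ∉ Set.range p₀ → (∃ i, ¬ G.Adj (p₀ i) x) → CRStep G x y →
      y ∈ Set.range q₁ ∨ y ∈ Set.range q₂) :
    HCopsWin G k := by
  refine ⟨twoRoundStrategy p₀ p₁ q₁ q₂, ?_, fun r hr => ?_⟩
  · rintro (_ | ⟨_ | _, _ | _⟩) (_ | _) i <;>
      first | exact hp₁ i | exact hq₁ i | exact hq₂ i | exact Or.inl rfl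
  by_cases hhidden : ∀ i, G.Adj (p₀ i) (r 0)
  · obtain ⟨i, hi⟩ := hinvisible _ hhidden
    exact ⟨0, i, Or.inr (by simpa [hObsList, twoRoundStrategy, hhidden])⟩
  by_cases hcaught : r 0 ∈ Set.range p₀
  · obtain ⟨i, hi⟩ := hcaught
    exact ⟨0, i, Or.inl hi⟩
  rcases hvisible _ _ hcaught (not_forall.1 hhidden) (hr 0) with ⟨i, hi⟩ | ⟨i, hi⟩
  · exact ⟨1, i, Or.inl (by simpa [hObsList, twoRoundStrategy, hhidden])⟩
  · exact ⟨1, i, Or.inr (by simpa [hObsList, twoRoundStrategy, hhidden])⟩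

theorem not_hCopsWin_of_forall_exists_invisible [Nonempty V] (G : SimpleGraph V)
    (hescape : ∀ (C C' : Fin k → V) (p : V),
      ∃ x, (∀ i, G.Adj (C i) x) ∧ x ∉ Set.range C' ∧ CRStep G p x) :
    ¬ HCopsWin G k := by
  rintro ⟨F, -, hwin⟩
  choose next hnext using hescape
  let C : ℕ → Fin k → V := fun m => F (List.replicate m none)
  let r : ℕ → V := fun m =>
    Nat.rec (next (C 0) (C 1) (Classical.arbitrary V)) (fun m x => next (C (m + 1)) (C (m + 2)) x) m
  have hr : ∀ m, (∀ i, G.Adj (C m i) (r m)) ∧ r m ∉ Set.range (C (m + 1)) := by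
    rintro (_ | m)
    exacts [⟨(hnext ..).1, (hnext ..).2.1⟩, ⟨(hnext ..).1, (hnext ..).2.1⟩]
  have hobs : ∀ m, hObsList G F r m = List.replicate m none := by
    intro m
    induction m with
    | zero => rfl
    | succ m ih => rw [hObsList, ih, if_pos (hr m).1, List.replicate_succ']
  obtain ⟨m, i, hcaught⟩ := hwin r (fun m => (hnext ..).2.2)
  rw [hobs, hobs] at hcaught
  rcases hcaught with h | h
  · exact (h ▸ (hr m).1 i).ne rfl
  · exact (hr m).2 ⟨i, h⟩

end Strategies

theorem Finset.exists_fin_range_eq {V : Type*} {k : ℕ} (s : Finset V) (hs : s.Nonempty)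
    (hk : #s ≤ k) : ∃ f : Fin k → V, Set.range f = s := by
  obtain ⟨g⟩ := Function.Embedding.nonempty_of_card_le (α := s) (β := Fin k) (by simpa)
  have : Nonempty s := hs.to_subtype
  exact ⟨Subtype.val ∘ Function.invFun g,
    by rw [(Function.invFun_surjective g.injective).range_comp, Subtype.range_coe]⟩

section TopDeleteEdges

variable {V : Type*} {u v : V}

theorem top_deleteEdges_adj {x y : V} :
    ((⊤ : SimpleGraph V).deleteEdges {s(u, v)}).Adj x y ↔
      x ≠ y ∧ ¬ (x = u ∧ y = v) ∧ ¬ (x = v ∧ y = u) := by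
  simp

theorem crStep_top_deleteEdges_iff (huv : u ≠ v) {x y : V} :
    CRStep ((⊤ : SimpleGraph V).deleteEdges {s(u, v)}) x y ↔
      ¬ (x = u ∧ y = v) ∧ ¬ (x = v ∧ y = u) := by
  rw [CRStep, top_deleteEdges_adj]
  grind

variable [Fintype V] [DecidableEq V]

theorem hCopsWin_top_deleteEdges (huv : u ≠ v) {k : ℕ} (hk : k + 2 ≤ Fintype.card V)
    (hcard : Fintype.card V ≤ 2 * k + 1) :
    HCopsWin ((⊤ : SimpleGraph V).deleteEdges {s(u, v)}) k := by
  obtain ⟨A, huA, hAv, hA⟩ : ∃ A : Finset V, {u} ⊆ A ∧ A ⊆ {v}ᶜ ∧ #A = k :=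
    exists_subsuperset_card_eq (by simpa using huv.symm) (by simp; omega) (by simp [card_compl]; omega)
  obtain ⟨B, hBuv, hB⟩ : ∃ B ⊆ ({u, v} : Finset V)ᶜ, #B = k :=
    exists_subset_card_eq (by rw [card_compl, card_pair huv]; omega)
  rw [singleton_subset_iff] at huA
  have hvA : v ∉ A := fun h => by simpa using hAv h
  have huB : u ∉ B := fun h => by simpa using hBuv h
  have hvB : v ∉ B := fun h => by simpa using hBuv h
  have hcardA : #(Aᶜ.erase v) = Fintype.card V - k - 1 := by
    rw [card_erase_of_mem (mem_compl.2 hvA), card_compl, hA]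
  have hcardB : #(Bᶜ.erase u) = Fintype.card V - k - 1 := by
    rw [card_erase_of_mem (mem_compl.2 huB), card_compl, hB]
  obtain ⟨p₀, hp₀⟩ := A.exists_fin_range_eq (k := k) ⟨u, huA⟩ hA.le
  obtain ⟨p₁, hp₁⟩ := (Aᶜ.erase v).exists_fin_range_eq (k := k) (card_pos.1 (by omega)) (by omega)
  obtain ⟨q₁, hq₁⟩ := B.exists_fin_range_eq (k := k) (card_pos.1 (by omega)) hB.le
  obtain ⟨q₂, hq₂⟩ := (Bᶜ.erase u).exists_fin_range_eq (k := k) (card_pos.1 (by omega)) (by omega)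
  have mem {s : Finset V} {f : Fin k → V} (h : Set.range f = s) (i : Fin k) : f i ∈ s :=
    mem_coe.1 (h ▸ Set.mem_range_self i)
  refine hCopsWin_of_twoRounds _ p₀ p₁ q₁ q₂
    (fun i => (crStep_top_deleteEdges_iff huv).2 (by have := mem hp₁ i; grind [mem_compl]))
    (fun i => (crStep_top_deleteEdges_iff huv).2 (by have := mem hq₁ i; grind))
    (fun i => (crStep_top_deleteEdges_iff huv).2 (by have := mem hq₁ i; grind))
    (fun x hx => ?_) (fun x y hx hvis hxy => ?_)
  · obtain ⟨i₀, hi₀⟩ : u ∈ Set.range p₀ := by simpa [hp₀] using huA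
    have := top_deleteEdges_adj.1 (hx i₀)
    rw [hp₁, mem_coe, mem_erase, mem_compl]
    refine ⟨by grind, fun hxA => ?_⟩
    obtain ⟨j, rfl⟩ : x ∈ Set.range p₀ := by rwa [hp₀]
    exact (hx j).ne rfl
  · obtain ⟨i, hi⟩ := hvis
    have hxv : x = v := by
      have := mem hp₀ i
      have : p₀ i ≠ x := fun h => hx ⟨i, h⟩
      rw [top_deleteEdges_adj] at hi
      grind
    rw [hxv, crStep_top_deleteEdges_iff huv] at hxy
    rw [hq₁, hq₂, mem_coe, mem_coe, mem_erase, mem_compl]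
    grind

theorem exists_invisible_step_top_deleteEdges (huv : u ≠ v) {k : ℕ}
    (hk : 2 * k + 2 ≤ Fintype.card V) (C C' : Fin k → V) (p : V) :
    ∃ x, (∀ i, ((⊤ : SimpleGraph V).deleteEdges {s(u, v)}).Adj (C i) x) ∧ x ∉ Set.range C' ∧
      CRStep ((⊤ : SimpleGraph V).deleteEdges {s(u, v)}) p x := by
  set free : Finset V := (univ.image C ∪ univ.image C')ᶜ
  have mem_free {x : V} : x ∈ free ↔ (∀ i, C i ≠ x) ∧ ∀ i, C' i ≠ x := by simp [free]
  have hfree : 2 ≤ #free := by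
    have : #(univ.image C ∪ univ.image C') ≤ k + k :=
      (card_union_le _ _).trans (add_le_add (card_image_le.trans (by simp))
        (card_image_le.trans (by simp)))
    rw [card_compl]
    omega
  by_cases hout : ∃ x ∈ free, x ≠ u ∧ x ≠ v
  · obtain ⟨x, hx, hxu, hxv⟩ := hout
    rw [mem_free] at hx
    refine ⟨x, fun i => ?_, fun ⟨i, hi⟩ => hx.2 i hi, ?_⟩
    · rw [top_deleteEdges_adj]
      grind
    · rw [crStep_top_deleteEdges_iff huv]
      grind
  push Not at hout
  have hfree_eq : free = {u, v} :=
    eq_of_subset_of_card_le (fun x hx => by grind) (by rw [card_pair huv]; exact hfree)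
  have hu : u ∈ free := by simp [hfree_eq]
  have hv : v ∈ free := by simp [hfree_eq]
  rw [mem_free] at hu hv
  -- No cop is on `u` or `v`, so both are invisible; the robber takes whichever it can reach.
  by_cases hpu : p = u
  · refine ⟨u, fun i => ?_, fun ⟨i, hi⟩ => hu.2 i hi, (crStep_top_deleteEdges_iff huv).2 (by grind)⟩
    rw [top_deleteEdges_adj]
    grind
  · refine ⟨v, fun i => ?_, fun ⟨i, hi⟩ => hv.2 i hi, (crStep_top_deleteEdges_iff huv).2 (by grind)⟩
    rw [top_deleteEdges_adj]
    grind

end TopDeleteEdges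

/-- For all `n ≥ 3`, `c_H(K_n − e) = ⌊n/2⌋`, where `K_n − e` is the
complete graph on `n` vertices with one edge removed. -/
theorem hyperopicCopNumber_completeGraph_deleteEdge (n : ℕ) (hn : 3 ≤ n)
    (u v : Fin n) (huv : u ≠ v) :
    hyperopicCopNumber ((⊤ : SimpleGraph (Fin n)).deleteEdges {s(u, v)}) = n / 2 := by
  have : Nonempty (Fin n) := ⟨u⟩
  refine IsLeast.csInf_eq ⟨hCopsWin_top_deleteEdges huv (by simp; omega) (by simp; omega),
    fun j hj => not_lt.1 fun hj_lt => ?_⟩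
  exact not_hCopsWin_of_forall_exists_invisible _
    (exists_invisible_step_top_deleteEdges huv (by simp; omega)) hj
end

section
/- For all n ≥ 5 and for any two distinct edges removed from the complete graph K_n, the resulting graph K_n − 2e satisfies c_H(K_n − 2e) ≤ ⌈n/2⌉ − 1. -/
section

variable {V : Type*} (G : SimpleGraph V) {k : ℕ}

theorem hCopsWin_of_dominate_then_cover (s t : Fin k → V) (hmove : ∀ i, CRStep G (s i) (t i))
    (hdom : ∀ v, ∃ i, CRStep G (s i) v) (hcover : ∀ v, (∀ i, G.Adj (s i) v) → ∃ i, t i = v) :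
    HCopsWin G k := by
  classical
  -- A hidden robber sends the cops from `s` to `t`; a robber seen at `v` is met there by every
  -- cop within reach. Only the first observation matters.
  let F : List (Option V) → Fin k → V
    | [] => s
    | none :: _ => t
    | some v :: _ => fun i => if CRStep G (s i) v then v else s i
  refine ⟨F, fun l o i => ?_, fun r _ => ⟨0, ?_⟩⟩
  · rcases l with _ | ⟨_ | _, _⟩
    · rcases o with _ | v
      · exact hmove i
      · show CRStep G (s i) (if CRStep G (s i) v then v else s i)
        split_ifs with h
        exacts [h, Or.inl rfl]
    all_goals exact Or.inl rfl
  · have hstart : F [] = s := rfl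
    simp only [hObsList, List.nil_append, hstart]
    by_cases hhidden : ∀ i, G.Adj (s i) (r 0)
    · obtain ⟨i, hi⟩ := hcover (r 0) hhidden
      exact ⟨i, Or.inr (by rwa [if_pos hhidden])⟩
    · obtain ⟨i, hi⟩ := hdom (r 0)
      exact ⟨i, Or.inr (by rw [if_neg hhidden]; exact if_pos hi)⟩

theorem Finset.exists_fin_cover_of_card_le {α : Type*} (R : Finset α) (hR : R.card ≤ k)
    (s : Fin k → α) :
    ∃ t : Fin k → α, (∀ i, t i = s i ∨ t i ∈ R) ∧ ∀ v ∈ R, ∃ i, t i = v := by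
  refine ⟨fun i => if h : (i : ℕ) < R.card then R.equivFin.symm ⟨i, h⟩ else s i,
    fun i => ?_, fun v hv => ⟨Fin.castLE hR (R.equivFin ⟨v, hv⟩), ?_⟩⟩
  · dsimp only
    split_ifs
    exacts [Or.inr (Subtype.prop _), Or.inl rfl]
  · simp

/-- Cops occupying `P` can reach every vertex of `X`, and a robber on `X` is never hidden
from them. -/
def Watches (P X : Finset V) : Prop :=
  ∀ x ∈ X, (∃ u ∈ P, G.Adj u x) ∧ ∃ u ∈ P, ¬ G.Adj u x

variable {G} in
theorem Watches.mono {P S X : Finset V} (h : Watches G P X)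
    (hPS : P ⊆ S) : Watches G S X := fun x hx =>
  ⟨(h x hx).1.imp fun _ ⟨hu, hadj⟩ => ⟨hPS hu, hadj⟩,
    (h x hx).2.imp fun _ ⟨hu, hnadj⟩ => ⟨hPS hu, hnadj⟩⟩

theorem hCopsWin_of_isClique_compl [Fintype V] (X S : Finset V) (hclique : G.IsClique (↑X)ᶜ)
    (hSX : Disjoint S X) (hS : S.Nonempty) (hwatch : Watches G S X)
    (hcard : Fintype.card V ≤ X.card + 2 * S.card) :
    HCopsWin G S.card := by
  classical
  set s : Fin S.card → V := fun i => S.equivFin.symm i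
  have hs_mem (i) : s i ∈ S := Subtype.prop _
  have hs_surj : ∀ u ∈ S, ∃ i, s i = u := fun u hu => ⟨S.equivFin ⟨u, hu⟩, by simp [s]⟩
  have hS_off : ∀ u ∈ S, u ∈ (↑X : Set V)ᶜ := fun u hu => Finset.disjoint_left.1 hSX hu
  have hR : ((S ∪ X)ᶜ).card ≤ S.card := by
    rw [Finset.card_compl, Finset.card_union_of_disjoint hSX]
    omega
  obtain ⟨t, ht, ht_cover⟩ := (S ∪ X)ᶜ.exists_fin_cover_of_card_le hR s
  refine hCopsWin_of_dominate_then_cover G s t (fun i => ?_) (fun v => ?_) (fun v hv => ?_)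
  · rcases ht i with h | h
    · exact Or.inl h.symm
    · simp only [Finset.mem_compl, Finset.mem_union, not_or] at h
      exact Or.inr (hclique (hS_off _ (hs_mem i)) h.2 fun he => h.1 (he ▸ hs_mem i))
  · by_cases hv : v ∈ X
    · obtain ⟨u, hu, hadj⟩ := (hwatch v hv).1
      obtain ⟨i, rfl⟩ := hs_surj u hu
      exact ⟨i, Or.inr hadj⟩
    · obtain ⟨u, hu⟩ := hS
      obtain ⟨i, rfl⟩ := hs_surj u hu
      by_cases h : s i = v
      · exact ⟨i, Or.inl h⟩
      · exact ⟨i, Or.inr (hclique (hS_off _ hu) hv h)⟩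
  · refine ht_cover v ?_
    simp only [Finset.mem_compl, Finset.mem_union, not_or]
    constructor
    · intro hvS
      obtain ⟨i, rfl⟩ := hs_surj v hvS
      exact G.irrefl (hv i)
    · intro hvX
      obtain ⟨u, hu, hnadj⟩ := (hwatch v hvX).2
      obtain ⟨i, rfl⟩ := hs_surj u hu
      exact hnadj (hv i)

theorem Sym2.shares_vertex_or_disjoint_of_ne {e₁ e₂ : Sym2 V}
    (h₁ : ¬ e₁.IsDiag) (h₂ : ¬ e₂.IsDiag) (hne : e₁ ≠ e₂) :
    (∃ a b c, a ≠ b ∧ a ≠ c ∧ b ≠ c ∧ e₁ = s(a, b) ∧ e₂ = s(a, c)) ∨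
      ∃ a b c d, a ≠ b ∧ c ≠ d ∧ a ≠ c ∧ a ≠ d ∧ b ≠ c ∧ b ≠ d ∧ e₁ = s(a, b) ∧ e₂ = s(c, d) := by
  induction e₁ using Sym2.ind with | _ a b =>
  induction e₂ using Sym2.ind with | _ c d =>
  rw [Sym2.mk_isDiag_iff] at h₁ h₂
  by_cases hac : a = c
  · subst hac
    exact Or.inl ⟨a, b, d, h₁, h₂, fun h => hne (by rw [h]), rfl, rfl⟩
  by_cases had : a = d
  · subst had
    exact Or.inl ⟨a, b, c, h₁, Ne.symm h₂, fun h => hne (by rw [h, Sym2.eq_swap]), rfl,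
      Sym2.eq_swap⟩
  by_cases hbc : b = c
  · subst hbc
    exact Or.inl ⟨b, a, d, Ne.symm h₁, h₂, fun h => hne (by rw [h, Sym2.eq_swap]), Sym2.eq_swap,
      rfl⟩
  by_cases hbd : b = d
  · subst hbd
    exact Or.inl ⟨b, a, c, Ne.symm h₁, Ne.symm h₂, fun h => hne (by rw [h, Sym2.eq_swap]),
      Sym2.eq_swap, Sym2.eq_swap⟩
  exact Or.inr ⟨a, b, c, d, h₁, h₂, hac, had, hbc, hbd, rfl, rfl⟩

theorem isClique_compl_deleteEdges (s : Set (Sym2 V)) (X : Set V)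
    (hX : ∀ e ∈ s, ∃ x ∈ X, x ∈ e) : ((⊤ : SimpleGraph V).deleteEdges s).IsClique Xᶜ := by
  intro u hu v hv huv
  refine SimpleGraph.deleteEdges_adj.2 ⟨huv, fun he => ?_⟩
  obtain ⟨x, hx, hxe⟩ := hX _ he
  rcases Sym2.mem_iff.1 hxe with rfl | rfl
  exacts [hu hx, hv hx]

theorem exists_watched_pair_deleteEdges [Fintype V] (hV : 4 ≤ Fintype.card V)
    {e₁ e₂ : Sym2 V} (h₁ : ¬ e₁.IsDiag) (h₂ : ¬ e₂.IsDiag) (hne : e₁ ≠ e₂) :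
    ∃ X P : Finset V, X.card = 2 ∧ P.card = 2 ∧ Disjoint P X ∧
      (∀ e ∈ ({e₁, e₂} : Set (Sym2 V)), ∃ x ∈ X, x ∈ e) ∧
      Watches ((⊤ : SimpleGraph V).deleteEdges {e₁, e₂}) P X := by
  classical
  rcases Sym2.shares_vertex_or_disjoint_of_ne h₁ h₂ hne with
    ⟨a, b, c, hab, hac, hbc, rfl, rfl⟩ | ⟨a, b, c, d, hab, hcd, hac, had, hbc, hbd, rfl, rfl⟩
  · obtain ⟨q, -, hq⟩ := Finset.exists_mem_notMem_of_card_lt_card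
      (s := {a, b, c}) (t := Finset.univ) (by simpa using Finset.card_le_three.trans_lt (by omega))
    simp only [Finset.mem_insert, Finset.mem_singleton, not_or] at hq
    refine ⟨{b, c}, {a, q}, by simp [hbc], by simp [Ne.symm hq.1], by simp; grind, ?_, ?_⟩
    · simp
    · simp [Watches, SimpleGraph.deleteEdges_adj]
      grind
  · refine ⟨{b, d}, {a, c}, by simp [hbd], by simp [hac], by simp; grind, ?_, ?_⟩
    · simp
    · simp [Watches, SimpleGraph.deleteEdges_adj]
      grind

end

/-- For all `n ≥ 5` and any two distinct edges removed from the complete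
graph `K_n`, the resulting graph `K_n − 2e` satisfies `c_H(K_n − 2e) ≤ ⌈n/2⌉ − 1`. -/
theorem hyperopicCopNumber_completeGraph_deleteTwoEdges (n : ℕ) (hn : 5 ≤ n)
    (e₁ e₂ : Sym2 (Fin n)) (h₁ : ¬ e₁.IsDiag) (h₂ : ¬ e₂.IsDiag) (hne : e₁ ≠ e₂) :
    hyperopicCopNumber ((⊤ : SimpleGraph (Fin n)).deleteEdges {e₁, e₂}) ≤
      (n + 1) / 2 - 1 := by
  obtain ⟨X, P, hX, hP, hPX, hcover, hwatch⟩ :=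
    exists_watched_pair_deleteEdges (by simp; omega) h₁ h₂ hne
  obtain ⟨S, hPS, hSX, hS⟩ := Finset.exists_subsuperset_card_eq
    (Finset.subset_compl_iff_disjoint_right.2 hPX) (n := (n + 1) / 2 - 1) (by omega)
    (by simp [Finset.card_compl, hX]; omega)
  have hwin := hCopsWin_of_isClique_compl _ X S (isClique_compl_deleteEdges _ _ hcover)
    (Finset.subset_compl_iff_disjoint_right.1 hSX) (Finset.card_pos.1 (by omega))
    (hwatch.mono hPS) (by simp [hX, hS]; omega)
  exact hS ▸ Nat.sInf_le hwin
end

section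
/- If a finite connected graph G has diameter at least 3 and its minimum degree satisfies δ(G) ≤ c(G), then c_H(G) ≤ c(G) + 1. -/
/-!
One cop sits on a vertex `u` of minimum degree while the other `c(G)` cops play a winning
strategy of the ordinary game; as long as the robber is visible they get perfect information
and win. The first time the robber becomes invisible it is adjacent to every cop, in
particular it lies in the neighbourhood of `u`, which has at most `c(G)` vertices. The cops
can compute the set of such vertices and, each being adjacent to all of them, occupy the whole
set in one move, landing on the robber.
-/

open Finset

theorem List.takeWhile_append_of_mem {α : Type*} {p : α → Bool} {l : List α} (l' : List α)
    {x : α} (hx : x ∈ l) (hpx : p x = false) :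
    (l ++ l').takeWhile p = l.takeWhile p := by
  rw [List.takeWhile_append, if_neg]
  intro h
  have hl : l.takeWhile p = l := (List.takeWhile_prefix p).eq_of_length h
  simpa [hpx] using List.takeWhile_eq_self_iff.mp hl x hx

namespace HyperopicCops

section Occupy

variable {α : Type*} {k : ℕ}

noncomputable def occupy (s : Finset α) (p : Fin k → α) (i : Fin k) : α :=
  if h : (i : ℕ) < #s then s.equivFin.symm ⟨i, h⟩ else p i

theorem occupy_mem_or_eq (s : Finset α) (p : Fin k → α) (i : Fin k) :
    occupy s p i ∈ s ∨ occupy s p i = p i := by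
  unfold occupy
  split_ifs
  · exact Or.inl (Subtype.prop _)
  · exact Or.inr rfl

theorem exists_occupy_eq {s : Finset α} (hs : #s ≤ k) (p : Fin k → α) {a : α}
    (ha : a ∈ s) : ∃ i, occupy s p i = a := by
  set j := s.equivFin ⟨a, ha⟩
  refine ⟨⟨j, j.isLt.trans_le hs⟩, ?_⟩
  simp [occupy, j]

end Occupy

variable {V : Type*} (G : SimpleGraph V)

theorem copsWin_card [Fintype V] : CopsWin G (Fintype.card V) :=
  ⟨fun _ => (Fintype.equivFin V).symm, fun _ _ _ => Or.inl rfl,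
    fun r _ => ⟨0, Fintype.equivFin V (r 0), Or.inl (by simp)⟩⟩

theorem copsWin_copNumber [Fintype V] : CopsWin G (copNumber G) :=
  Nat.sInf_mem (s := {k | CopsWin G k}) ⟨_, copsWin_card G⟩

section Observations

variable {k : ℕ} (F : List (Option V) → Fin k → V) (r : ℕ → V)

theorem hObsList_succ_of_invisible {n : ℕ} (h : ∀ i, G.Adj (F (hObsList G F r n) i) (r n)) :
    hObsList G F r (n + 1) = hObsList G F r n ++ [none] := by
  rw [hObsList, if_pos h]

theorem hObsList_eq_map_some {n : ℕ}
    (h : ∀ m < n, ¬ ∀ i, G.Adj (F (hObsList G F r m) i) (r m)) :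
    hObsList G F r n = (List.range n).map (some ∘ r) := by
  induction n with
  | zero => rfl
  | succ n ih =>
    rw [hObsList, if_neg (h n n.lt_succ_self), ih fun m hm => h m (hm.trans n.lt_succ_self),
      List.range_succ, List.map_append]
    rfl

end Observations

def guardStrategy {c : ℕ} (Fp : List V → Fin c → V) (u : V) (l : List (Option V)) :
    Fin (c + 1) → V :=
  Fin.cons u (Fp l.reduceOption)

theorem guardStrategy_append_some_legal {c : ℕ} {Fp : List V → Fin c → V}
    (hFp : ∀ l x i, CRStep G (Fp l i) (Fp (l ++ [x]) i)) (u : V)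
    (l : List (Option V)) (x : V) (i : Fin (c + 1)) :
    CRStep G (guardStrategy Fp u l i) (guardStrategy Fp u (l ++ [some x]) i) := by
  induction i using Fin.cases with
  | zero => exact Or.inl rfl
  | succ j => simpa [guardStrategy, List.reduceOption_append] using hFp l.reduceOption x j

variable [Fintype V] [DecidableRel G.Adj]

def invisibleSet {k : ℕ} (p : Fin k → V) : Finset V :=
  univ.filter fun v => ∀ i, G.Adj (p i) v

theorem card_invisibleSet_le {k : ℕ} {p : Fin k → V} {i : Fin k} :
    #(invisibleSet G p) ≤ G.degree (p i) := by
  rw [← G.card_neighborFinset_eq_degree]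
  refine card_le_card fun v hv => ?_
  simp only [invisibleSet, mem_filter] at hv
  exact (G.mem_neighborFinset _ _).mpr (hv.2 i)

section Strategies

variable {c : ℕ} (Fp : List V → Fin c → V) (u : V)

open Classical in
/-- `l.takeWhile Option.isSome` is the history up to the first moment the robber vanished. -/
noncomputable def trapStrategy (l : List (Option V)) : Fin (c + 1) → V :=
  if none ∈ l then
    occupy (invisibleSet G (guardStrategy Fp u (l.takeWhile Option.isSome)))
      (guardStrategy Fp u (l.takeWhile Option.isSome))
  else guardStrategy Fp u l

variable {Fp u}

theorem trapStrategy_of_none_notMem {l : List (Option V)} (hl : none ∉ l) :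
    trapStrategy G Fp u l = guardStrategy Fp u l := by
  rw [trapStrategy, if_neg hl]

theorem trapStrategy_append_of_none_notMem {l : List (Option V)} (hl : none ∉ l) :
    trapStrategy G Fp u (l ++ [none]) =
      occupy (invisibleSet G (guardStrategy Fp u l)) (guardStrategy Fp u l) := by
  have hsome : ∀ o ∈ l, o.isSome := fun o ho =>
    Option.ne_none_iff_isSome.mp (ne_of_mem_of_not_mem ho hl)
  rw [trapStrategy, if_pos (List.mem_append_right _ (List.mem_singleton_self _)),
    List.takeWhile_append_of_pos hsome]
  simp

theorem trapStrategy_append_of_none_mem {l : List (Option V)} (hl : none ∈ l)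
    (l' : List (Option V)) : trapStrategy G Fp u (l ++ l') = trapStrategy G Fp u l := by
  rw [trapStrategy, if_pos (List.mem_append_left _ hl), List.takeWhile_append_of_mem _ hl rfl,
    trapStrategy, if_pos hl]

theorem trapStrategy_legal (hFp : ∀ l x i, CRStep G (Fp l i) (Fp (l ++ [x]) i))
    (l : List (Option V)) (o : Option V) (i : Fin (c + 1)) :
    CRStep G (trapStrategy G Fp u l i) (trapStrategy G Fp u (l ++ [o]) i) := by
  by_cases hl : none ∈ l
  · rw [trapStrategy_append_of_none_mem G hl]
    exact Or.inl rfl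
  rw [trapStrategy_of_none_notMem G hl]
  cases o with
  | none =>
    rw [trapStrategy_append_of_none_notMem G hl]
    rcases occupy_mem_or_eq (invisibleSet G (guardStrategy Fp u l)) (guardStrategy Fp u l) i
      with hmem | heq
    · exact Or.inr ((mem_filter.mp hmem).2 i)
    · exact Or.inl heq.symm
  | some x =>
    have hl' : none ∉ l ++ [some x] := by simpa using hl
    rw [trapStrategy_of_none_notMem G hl']
    exact guardStrategy_append_some_legal G hFp u l x i

variable (r : ℕ → V)

theorem exists_trapStrategy_eq_of_first_invisible (hu : G.degree u ≤ c) {n : ℕ}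
    (hvis : ∀ m < n,
      ¬ ∀ i, G.Adj (trapStrategy G Fp u (hObsList G (trapStrategy G Fp u) r m) i) (r m))
    (hinv : ∀ i, G.Adj (trapStrategy G Fp u (hObsList G (trapStrategy G Fp u) r n) i) (r n)) :
    ∃ i, trapStrategy G Fp u (hObsList G (trapStrategy G Fp u) r (n + 1)) i = r n := by
  set l := hObsList G (trapStrategy G Fp u) r n
  have hl : none ∉ l := by simp [l, hObsList_eq_map_some G _ r hvis]
  have hmem : r n ∈ invisibleSet G (guardStrategy Fp u l) :=
    mem_filter.mpr ⟨mem_univ _, trapStrategy_of_none_notMem G hl ▸ hinv⟩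
  have hcard : #(invisibleSet G (guardStrategy Fp u l)) ≤ c + 1 :=
    (card_invisibleSet_le G (i := 0)).trans (hu.trans c.le_succ)
  rw [hObsList_succ_of_invisible G _ r hinv, trapStrategy_append_of_none_notMem G hl]
  exact exists_occupy_eq hcard _ hmem

theorem trapStrategy_eq_of_visible
    (hvis : ∀ m,
      ¬ ∀ i, G.Adj (trapStrategy G Fp u (hObsList G (trapStrategy G Fp u) r m) i) (r m))
    (n : ℕ) (i : Fin c) :
    trapStrategy G Fp u (hObsList G (trapStrategy G Fp u) r n) i.succ =
      Fp (robberHist r n) i := by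
  have hl := hObsList_eq_map_some G (trapStrategy G Fp u) r (n := n) fun m _ => hvis m
  rw [trapStrategy_of_none_notMem G (by simp [hl]), hl]
  simp [guardStrategy, robberHist, List.reduceOption]

theorem trapStrategy_captures (hu : G.degree u ≤ c)
    (hFp : ∀ r : ℕ → V, (∀ n, CRStep G (r n) (r (n + 1))) →
      ∃ n, ∃ i, Fp (robberHist r n) i = r n ∨ Fp (robberHist r (n + 1)) i = r n)
    (hr : ∀ n, CRStep G (r n) (r (n + 1))) :
    ∃ n, ∃ i, trapStrategy G Fp u (hObsList G (trapStrategy G Fp u) r n) i = r n ∨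
      trapStrategy G Fp u (hObsList G (trapStrategy G Fp u) r (n + 1)) i = r n := by
  classical
  by_cases h : ∃ n,
      ∀ i, G.Adj (trapStrategy G Fp u (hObsList G (trapStrategy G Fp u) r n) i) (r n)
  · obtain ⟨i, hi⟩ := exists_trapStrategy_eq_of_first_invisible G r hu
      (fun _ => Nat.find_min h) (Nat.find_spec h)
    exact ⟨Nat.find h, i, Or.inr hi⟩
  · obtain ⟨n, i, hi⟩ := hFp r hr
    refine ⟨n, i.succ, ?_⟩
    rwa [trapStrategy_eq_of_visible G r (not_exists.mp h),
      trapStrategy_eq_of_visible G r (not_exists.mp h)]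

end Strategies

theorem hCopsWin_succ_of_copsWin {c : ℕ} (hc : CopsWin G c) {u : V} (hu : G.degree u ≤ c) :
    HCopsWin G (c + 1) :=
  let ⟨Fp, hFp_legal, hFp_win⟩ := hc
  ⟨trapStrategy G Fp u, trapStrategy_legal G hFp_legal, fun r hr =>
    trapStrategy_captures G r hu hFp_win hr⟩

end HyperopicCops

theorem hyperopicCopNumber_le_of_three_le_diam_of_minDegree_le_general {V : Type*} [Fintype V]
    (G : SimpleGraph V) [DecidableRel G.Adj] (hG : G.Connected)
    (hδ : G.minDegree ≤ copNumber G) :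
    hyperopicCopNumber G ≤ copNumber G + 1 := by
  have : Nonempty V := hG.nonempty
  obtain ⟨u, hu⟩ := G.exists_minimal_degree_vertex
  exact Nat.sInf_le (HyperopicCops.hCopsWin_succ_of_copsWin G
    (HyperopicCops.copsWin_copNumber G) (hu ▸ hδ))

/-- If a finite connected graph `G` has diameter at least 3 and its
minimum degree satisfies `δ(G) ≤ c(G)`, then `c_H(G) ≤ c(G) + 1`. -/
theorem hyperopicCopNumber_le_of_three_le_diam_of_minDegree_le {V : Type*} [Fintype V]
    (G : SimpleGraph V) [DecidableRel G.Adj] (hG : G.Connected) (hd : 3 ≤ G.diam)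
    (hδ : G.minDegree ≤ copNumber G) :
    hyperopicCopNumber G ≤ copNumber G + 1 :=
  hyperopicCopNumber_le_of_three_le_diam_of_minDegree_le_general G hG hδ
end

section
/- If G is a finite connected bipartite graph of diameter 3 on n ≥ 23 vertices, then c_H(G) < ⌈n/2⌉. -/
/-!
If a set `D` of vertices dominates `G` and no vertex is adjacent to all of `D`, then hyperopic
cops placed on `D` see the robber's starting vertex and one of them steps onto it, so
`c_H(G) ≤ |D|`. In a bipartite graph of diameter 3 with parts `A`, `B`, two vertices of the same
part have a common neighbour. If both parts contain a vertex of degree at most 4, say `a` and `b`,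
then `N(a) ∪ N(b)` is such a set, of size at most 8. Otherwise, say every vertex of `B` has degree
at least 5; for `b ∈ B` with four neighbours `X`, both `(A \ X) ∪ {b}` (of size `|A| - 3`) and
`B ∪ {a}` (of size `|B| + 1`) are such sets, and the smaller one has size at most `(n - 2) / 2`.
-/

open Finset

def pounceStrategy {V : Type*} {k : ℕ} (e : Fin k → V) (p : V → Fin k) :
    List (Option V) → Fin k → V
  | some x :: _, i => if i = p x then x else e i
  | _, i => e i

namespace SimpleGraph

variable {V : Type*} {G : SimpleGraph V}

structure IsPouncingSet (G : SimpleGraph V) (D : Finset V) : Prop where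
  exists_crStep (v : V) : ∃ u ∈ D, CRStep G u v
  exists_not_adj (v : V) : ∃ u ∈ D, ¬ G.Adj u v

theorem IsPouncingSet.hCopsWin {D : Finset V} (hD : G.IsPouncingSet D) : HCopsWin G #D := by
  classical
  let e : Fin #D → V := fun i => D.equivFin.symm i
  have he : ∀ u ∈ D, ∃ i, e i = u := fun u hu => ⟨D.equivFin ⟨u, hu⟩, by simp [e]⟩
  have hstep : ∀ v, ∃ i, CRStep G (e i) v := fun v => by
    obtain ⟨u, hu, huv⟩ := hD.exists_crStep v
    obtain ⟨i, rfl⟩ := he u hu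
    exact ⟨i, huv⟩
  choose p hp using hstep
  refine ⟨pounceStrategy e p, ?_, fun r _ => ⟨0, p (r 0), Or.inr ?_⟩⟩
  · rintro (_ | ⟨_ | _, _⟩) (_ | x) i
    case nil.some =>
      by_cases hi : i = p x
      · subst hi
        simpa [pounceStrategy] using hp x
      · exact Or.inl (by simp [pounceStrategy, hi])
    all_goals exact Or.inl rfl
  · have hseen : ¬ ∀ i, G.Adj (e i) (r 0) := fun hall => by
      obtain ⟨u, hu, hnadj⟩ := hD.exists_not_adj (r 0)
      obtain ⟨i, rfl⟩ := he u hu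
      exact hnadj (hall i)
    have hobs : hObsList G (pounceStrategy e p) r 1 = [some (r 0)] := by
      simp [hObsList, pounceStrategy, hseen]
    simp [hobs, pounceStrategy]

theorem IsPouncingSet.hyperopicCopNumber_le {D : Finset V} (hD : G.IsPouncingSet D) :
    hyperopicCopNumber G ≤ #D :=
  Nat.sInf_le hD.hCopsWin

theorem Colorable.exists_isBipartiteWith_compl [Fintype V] [DecidableEq V] (h : G.Colorable 2) :
    ∃ S : Finset V, G.IsBipartiteWith ↑S ↑Sᶜ := by
  obtain ⟨c⟩ := h
  refine ⟨univ.filter (c · = 0), ?_, fun v w hvw => ?_⟩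
  · rw [coe_compl]
    exact disjoint_compl_right
  · have := c.valid hvw
    simp only [coe_compl, Set.mem_compl_iff, mem_coe, mem_filter_univ]
    omega

section Bipartition

variable [Fintype V] [DecidableEq V] {S : Finset V}

theorem IsBipartiteWith.mem_iff_notMem_of_adj (hS : G.IsBipartiteWith ↑S ↑Sᶜ) {u v : V}
    (h : G.Adj u v) : u ∈ S ↔ v ∉ S := by
  rcases hS.mem_of_adj h with ⟨hu, hv⟩ | ⟨hu, hv⟩ <;> simp_all

theorem IsBipartiteWith.compl (hS : G.IsBipartiteWith ↑S ↑Sᶜ) : G.IsBipartiteWith ↑Sᶜ ↑Sᶜᶜ := by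
  simpa only [compl_compl] using hS.symm

theorem IsBipartiteWith.even_length_iff (hS : G.IsBipartiteWith ↑S ↑Sᶜ) {u v : V}
    (p : G.Walk u v) : Even p.length ↔ (u ∈ S ↔ v ∈ S) := by
  induction p with
  | nil => simp
  | cons h p ih =>
    rw [Walk.length_cons, Nat.even_add_one, ih, hS.mem_iff_notMem_of_adj h]
    tauto

theorem IsBipartiteWith.exists_adj_adj_of_ediam_le_three [Nontrivial V]
    (hS : G.IsBipartiteWith ↑S ↑Sᶜ) (hG : G.ediam ≤ 3) {u v : V} (huv : u ∈ S ↔ v ∈ S) :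
    ∃ w, G.Adj u w ∧ G.Adj v w := by
  obtain rfl | hne := eq_or_ne u v
  · have hconn : G.Preconnected :=
      preconnected_of_ediam_ne_top (ne_top_of_le_ne_top (by decide) hG)
    obtain ⟨w, hw⟩ := hconn.exists_adj_of_nontrivial u
    exact ⟨w, hw, hw⟩
  obtain ⟨p, hp⟩ := exists_walk_of_edist_ne_top
    (ne_top_of_le_ne_top (by decide) (edist_le_ediam.trans hG) : G.edist u v ≠ ⊤)
  obtain ⟨k, hk⟩ := (hS.even_length_iff p).mpr huv
  have hle : p.length ≤ 3 := by exact_mod_cast hp ▸ edist_le_ediam.trans hG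
  have hpos : p.length ≠ 0 := fun h0 => hne (Walk.eq_of_length_eq_zero h0)
  have h2 : G.edist u v = 2 := by rw [← hp]; norm_cast; omega
  obtain ⟨w, hw⟩ := (edist_eq_two_iff.mp h2).2.2
  exact ⟨w, (G.mem_commonNeighbors.mp hw).1, (G.mem_commonNeighbors.mp hw).2⟩

theorem IsBipartiteWith.exists_notMem (hS : G.IsBipartiteWith ↑S ↑Sᶜ) [Nonempty V]
    (hnbr : ∀ v, ∃ w, G.Adj v w) : ∃ b, b ∉ S := by
  obtain ⟨v⟩ := ‹Nonempty V›
  obtain ⟨w, hw⟩ := hnbr v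
  by_cases hv : v ∈ S
  · exact ⟨w, (hS.mem_iff_notMem_of_adj hw).mp hv⟩
  · exact ⟨v, hv⟩

variable [DecidableRel G.Adj]

theorem IsBipartiteWith.isPouncingSet_insert_sdiff (hS : G.IsBipartiteWith ↑S ↑Sᶜ) {b : V}
    (hb : b ∉ S) {X : Finset V} (hX : X ⊆ G.neighborFinset b)
    (hdeg : ∀ v ∉ S, #X < G.degree v) (hSX : (S \ X).Nonempty) :
    G.IsPouncingSet (insert b (S \ X)) where
  exists_crStep v := by
    by_cases hv : v ∈ S
    · by_cases hvX : v ∈ X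
      · exact ⟨b, mem_insert_self _ _, Or.inr ((mem_neighborFinset _ _ _).mp (hX hvX))⟩
      · exact ⟨v, mem_insert_of_mem (mem_sdiff.mpr ⟨hv, hvX⟩), Or.inl rfl⟩
    · -- `v` has more neighbours, all in `S`, than `X` has elements
      have hsub : G.neighborFinset v ⊆ S := isBipartiteWith_neighborFinset_subset' hS (by simpa)
      obtain ⟨u, hu⟩ : (G.neighborFinset v \ X).Nonempty := by
        rw [← card_pos]
        have := le_card_sdiff X (G.neighborFinset v)
        have := hdeg v hv
        rw [← card_neighborFinset_eq_degree] at this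
        omega
      obtain ⟨huv, huX⟩ := mem_sdiff.mp hu
      exact ⟨u, mem_insert_of_mem (mem_sdiff.mpr ⟨hsub huv, huX⟩),
        Or.inr ((mem_neighborFinset _ _ _).mp huv).symm⟩
  exists_not_adj v := by
    by_cases hv : v ∈ S
    · obtain ⟨u, hu⟩ := hSX
      refine ⟨u, mem_insert_of_mem hu, fun huv => ?_⟩
      exact (hS.mem_iff_notMem_of_adj huv).mp (mem_sdiff.mp hu).1 hv
    · refine ⟨b, mem_insert_self _ _, fun hbv => ?_⟩
      have := hS.mem_iff_notMem_of_adj hbv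
      tauto

theorem IsBipartiteWith.isPouncingSet_neighborFinset_union (hS : G.IsBipartiteWith ↑S ↑Sᶜ)
    (hcommon : ∀ u v, (u ∈ S ↔ v ∈ S) → ∃ w, G.Adj u w ∧ G.Adj v w) {a b : V} (ha : a ∈ S)
    (hb : b ∉ S) : G.IsPouncingSet (G.neighborFinset a ∪ G.neighborFinset b) where
  exists_crStep v := by
    obtain ⟨w, hw, hvw⟩ := hcommon (if v ∈ S then a else b) v (by split_ifs <;> simp_all)
    refine ⟨w, mem_union.mpr ?_, Or.inr hvw.symm⟩
    split_ifs at hw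
    · exact Or.inl ((mem_neighborFinset _ _ _).mpr hw)
    · exact Or.inr ((mem_neighborFinset _ _ _).mpr hw)
  exists_not_adj v := by
    obtain ⟨w, hw, -⟩ := hcommon (if v ∈ S then b else a) (if v ∈ S then b else a) Iff.rfl
    refine ⟨w, mem_union.mpr ?_, fun hwv => ?_⟩
    · split_ifs at hw
      · exact Or.inr ((mem_neighborFinset _ _ _).mpr hw)
      · exact Or.inl ((mem_neighborFinset _ _ _).mpr hw)
    · have h1 := hS.mem_iff_notMem_of_adj hw
      have h2 := hS.mem_iff_notMem_of_adj hwv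
      split_ifs at h1 <;> tauto

theorem IsBipartiteWith.exists_isPouncingSet_two_mul_card_add_two_le [Nonempty V]
    (hS : G.IsBipartiteWith ↑S ↑Sᶜ) (hnbr : ∀ v, ∃ w, G.Adj v w)
    (hdeg : ∀ v ∉ S, 4 < G.degree v) :
    ∃ D, G.IsPouncingSet D ∧ 2 * #D + 2 ≤ Fintype.card V := by
  obtain ⟨b, hb⟩ := hS.exists_notMem hnbr
  have hbS : G.neighborFinset b ⊆ S := isBipartiteWith_neighborFinset_subset' hS (by simpa)
  have hcard : #S + #Sᶜ = Fintype.card V := card_add_card_compl S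
  have hbdeg : 4 < #(G.neighborFinset b) := (card_neighborFinset_eq_degree G b).symm ▸ hdeg b hb
  have hSbig : 4 < #S := hbdeg.trans_le (card_le_card hbS)
  by_cases hsize : 2 * #S ≤ Fintype.card V + 4
  · obtain ⟨X, hXb, hX⟩ := exists_subset_card_eq
      ((hdeg b hb).le.trans (card_neighborFinset_eq_degree G b).ge)
    have hSX : #(S \ X) = #S - 4 := by rw [card_sdiff_of_subset (hXb.trans hbS), hX]
    refine ⟨_, hS.isPouncingSet_insert_sdiff hb hXb (by simpa [hX]) ?_, ?_⟩
    · rw [← card_pos, hSX]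
      omega
    · have := card_insert_le b (S \ X)
      omega
  · obtain ⟨a, ha⟩ := hS.compl.exists_notMem hnbr
    have hpos : ∀ v ∉ Sᶜ, #(∅ : Finset V) < G.degree v := fun v _ =>
      (G.degree_pos_iff_exists_adj v).mpr (hnbr v)
    refine ⟨_, hS.compl.isPouncingSet_insert_sdiff ha (empty_subset _) hpos ⟨b, by simpa⟩, ?_⟩
    have := card_insert_le a (Sᶜ \ ∅)
    rw [sdiff_empty] at this ⊢
    omega

end Bipartition

end SimpleGraph

theorem hyperopicCopNumber_lt_of_bipartite_diam_three_general {V : Type*} [Fintype V]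
    (G : SimpleGraph V) (hbip : G.Colorable 2)
    (hd : G.diam = 3) (hn : 23 ≤ Fintype.card V) :
    hyperopicCopNumber G < (Fintype.card V + 1) / 2 := by
  classical
  have : Nontrivial V := G.nontrivial_of_diam_ne_zero (by omega)
  have hediam : G.ediam ≤ 3 := by
    rw [← ENat.natCast_toNat (G.ediam_ne_top_of_diam_ne_zero (by omega))]
    exact_mod_cast hd.le
  obtain ⟨S, hS⟩ := hbip.exists_isBipartiteWith_compl
  have hcommon : ∀ u v, (u ∈ S ↔ v ∈ S) → ∃ w, G.Adj u w ∧ G.Adj v w := fun _ _ =>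
    hS.exists_adj_adj_of_ediam_le_three hediam
  have hnbr (v : V) : ∃ w, G.Adj v w := (hcommon v v Iff.rfl).imp fun _ => And.left
  suffices ∃ D, G.IsPouncingSet D ∧ #D < (Fintype.card V + 1) / 2 by
    obtain ⟨D, hD, hcard⟩ := this
    exact hD.hyperopicCopNumber_le.trans_lt hcard
  by_cases hdegS : ∀ v ∉ S, 4 < G.degree v
  · obtain ⟨D, hD, hcard⟩ := hS.exists_isPouncingSet_two_mul_card_add_two_le hnbr hdegS
    exact ⟨D, hD, by omega⟩
  by_cases hdegSc : ∀ v ∉ Sᶜ, 4 < G.degree v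
  · obtain ⟨D, hD, hcard⟩ := hS.compl.exists_isPouncingSet_two_mul_card_add_two_le hnbr hdegSc
    exact ⟨D, hD, by omega⟩
  push Not at hdegS hdegSc
  obtain ⟨b, hb, hdb⟩ := hdegS
  obtain ⟨a, ha, hda⟩ := hdegSc
  refine ⟨_, hS.isPouncingSet_neighborFinset_union hcommon (by simpa using ha) hb, ?_⟩
  calc #(G.neighborFinset a ∪ G.neighborFinset b)
      ≤ G.degree a + G.degree b := by
        convert card_union_le _ _ <;> exact (G.card_neighborFinset_eq_degree _).symm
    _ < (Fintype.card V + 1) / 2 := by omega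

/-- If `G` is a finite connected bipartite graph of diameter 3 on
`n ≥ 23` vertices, then `c_H(G) < ⌈n/2⌉`. -/
theorem hyperopicCopNumber_lt_of_bipartite_diam_three {V : Type*} [Fintype V]
    (G : SimpleGraph V) (hG : G.Connected) (hbip : G.Colorable 2)
    (hd : G.diam = 3) (hn : 23 ≤ Fintype.card V) :
    hyperopicCopNumber G < (Fintype.card V + 1) / 2 :=
  hyperopicCopNumber_lt_of_bipartite_diam_three_general G hbip hd hn
end
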